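/- Let U₀ ≠ 0, σ > 0, c ∈ ℝ, κ = √6, and U(φ) = U₀·((φ−c)² − σ²)². For every φ with (φ−c)² > σ², setting λ(φ) = −(√6/κ)·U′(φ)/U(φ) and Γ(φ) = U″(φ)U(φ)/U′(φ)², one has λ(φ) = −4(φ−c)/((φ−c)² − σ²) and Γ(φ) = 3/4 − σ²/(4(φ−c)²) = 3/4 − σ²λ(φ)²/(4·(2 + √(4 + σ²λ(φ)²))²). -/

import Mathlib

/-! On the region `σ² < (φ - c)²` write `x = φ - c`. Then `U'/U = 4x/(x² - σ²)` and
`U''U/U'² = (3x² - σ²)/(4x²)`, so `λ = -4x/(x² - σ²)`. Expressing `x` back through `λ` rests on the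
perfect square `4 + σ²λ² = (2(x² + σ²)/(x² - σ²))²`, whose root is taken on the positive side since
`x² > σ²`; this gives `2 + √(4 + σ²λ²) = 4x²/(x² - σ²)` and hence `σ²λ²/(4(2 + √(4 + σ²λ²))²) = σ²/(4x²)`. -/

open Real

section HiggsPotential

variable (U₀ σ c : ℝ)

theorem hasDerivAt_higgs (x : ℝ) :
    HasDerivAt (fun φ => U₀ * ((φ - c) ^ 2 - σ ^ 2) ^ 2)
      (4 * U₀ * (x - c) * ((x - c) ^ 2 - σ ^ 2)) x := by
  have hshift : HasDerivAt (fun φ : ℝ => φ - c) 1 x := (hasDerivAt_id x).sub_const c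
  refine ((((hshift.fun_pow 2).sub_const (σ ^ 2)).fun_pow 2).const_mul U₀).congr_deriv ?_
  push_cast
  ring

theorem deriv_higgs :
    deriv (fun φ => U₀ * ((φ - c) ^ 2 - σ ^ 2) ^ 2)
      = fun x => 4 * U₀ * (x - c) * ((x - c) ^ 2 - σ ^ 2) :=
  funext fun x => (hasDerivAt_higgs U₀ σ c x).deriv

theorem deriv_deriv_higgs (x : ℝ) :
    deriv (deriv (fun φ => U₀ * ((φ - c) ^ 2 - σ ^ 2) ^ 2)) x
      = 4 * U₀ * (3 * (x - c) ^ 2 - σ ^ 2) := by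
  rw [deriv_higgs]
  have hshift : HasDerivAt (fun φ : ℝ => φ - c) 1 x := (hasDerivAt_id x).sub_const c
  refine (((hshift.const_mul (4 * U₀)).fun_mul
    ((hshift.fun_pow 2).sub_const (σ ^ 2))).congr_deriv ?_).deriv
  push_cast
  ring

end HiggsPotential

section Algebra

variable {x σ : ℝ}

theorem sqrt_four_add_sq_mul_div_sq (h : σ ^ 2 < x ^ 2) :
    √(4 + σ ^ 2 * (-4 * x / (x ^ 2 - σ ^ 2)) ^ 2) = 2 * (x ^ 2 + σ ^ 2) / (x ^ 2 - σ ^ 2) := by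
  have hgap : 0 < x ^ 2 - σ ^ 2 := sub_pos.mpr h
  have hsquare : 4 + σ ^ 2 * (-4 * x / (x ^ 2 - σ ^ 2)) ^ 2
      = (2 * (x ^ 2 + σ ^ 2) / (x ^ 2 - σ ^ 2)) ^ 2 := by
    field_simp
    ring
  rw [hsquare, sqrt_sq (by positivity)]

theorem sq_mul_div_two_add_sqrt_eq (h : σ ^ 2 < x ^ 2) :
    σ ^ 2 * (-4 * x / (x ^ 2 - σ ^ 2)) ^ 2
        / (4 * (2 + √(4 + σ ^ 2 * (-4 * x / (x ^ 2 - σ ^ 2)) ^ 2)) ^ 2)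
      = σ ^ 2 / (4 * x ^ 2) := by
  have hgap : x ^ 2 - σ ^ 2 ≠ 0 := (sub_pos.mpr h).ne'
  have hx : x ≠ 0 := by
    rintro rfl
    nlinarith [sq_nonneg σ]
  have hdenom : 2 + 2 * (x ^ 2 + σ ^ 2) / (x ^ 2 - σ ^ 2) = 4 * x ^ 2 / (x ^ 2 - σ ^ 2) := by
    field_simp
    ring
  rw [sqrt_four_add_sq_mul_div_sq h, hdenom]
  field_simp

end Algebra

theorem higgs_potential_Gamma (U₀ σ c : ℝ) (hU₀ : U₀ ≠ 0) :
    let κ : ℝ := Real.sqrt 6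
    let U : ℝ → ℝ := fun φ => U₀*((φ - c)^2 - σ^2)^2
    let lam : ℝ → ℝ := fun φ => -(Real.sqrt 6 / κ) * deriv U φ / U φ
    let Γ : ℝ → ℝ := fun φ => deriv (deriv U) φ * U φ / (deriv U φ)^2
    ∀ φ : ℝ, σ^2 < (φ - c)^2 →
      lam φ = -4*(φ - c)/((φ - c)^2 - σ^2) ∧
      Γ φ = 3/4 - σ^2/(4*(φ - c)^2) ∧
      Γ φ = 3/4 - σ^2*(lam φ)^2/(4*(2 + Real.sqrt (4 + σ^2*(lam φ)^2))^2) := by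
  intro κ U lam Γ φ hφ
  have hκ : √6 / κ = 1 := div_self (by positivity)
  have hgap : (φ - c) ^ 2 - σ ^ 2 ≠ 0 := (sub_pos.mpr hφ).ne'
  have hshift : φ - c ≠ 0 := by
    intro h
    nlinarith [sq_nonneg σ, h ▸ hφ]
  have hlam : lam φ = -4 * (φ - c) / ((φ - c) ^ 2 - σ ^ 2) := by
    simp only [lam, U, deriv_higgs, hκ]
    field_simp
  have hΓ : Γ φ = 3 / 4 - σ ^ 2 / (4 * (φ - c) ^ 2) := by
    simp only [Γ, U]
    rw [deriv_deriv_higgs, deriv_higgs]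
    field_simp
  refine ⟨hlam, hΓ, ?_⟩
  rw [hΓ, hlam, sq_mul_div_two_add_sqrt_eq hφ]
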